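/- Let A be a commutative real associative algebra and let p be a seminorm on A satisfying the square property p(a²) = p(a)² for all a ∈ A. Then p is submultiplicative: p(ab) ≤ p(a)·p(b) for all a, b ∈ A. -/

import Mathlib

/-!
Polarization, `4xy = (x + y)² - (x - y)²`, together with the square property gives
`p(xy) ≤ (p x + p y)² / 2`; rescaling `x` and `y` independently turns this into
`p(xy) ≤ 2 p(x) p(y)`. Applying that bound to `x^(2^n)` and `y^(2^n)` and using the square
property again yields `p(xy)^(2^n) ≤ 2 (p(x) p(y))^(2^n)`, and taking `2^n`-th roots as
`n → ∞` removes the constant.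
-/

open Filter Topology

theorem le_of_forall_pow_two_pow_le_mul {x y C : ℝ} (hy : 0 ≤ y)
    (h : ∀ n : ℕ, x ^ 2 ^ n ≤ C * y ^ 2 ^ n) : x ≤ y := by
  by_contra! hyx
  rcases hy.eq_or_lt with rfl | hy
  · linarith [show x ≤ 0 by simpa using h 0]
  obtain ⟨n, hn⟩ := pow_unbounded_of_one_lt C ((one_lt_div hy).2 hyx)
  have hratio : (x / y) ^ 2 ^ n ≤ C := by
    rw [div_pow, div_le_iff₀ (by positivity)]
    exact h n
  have hmono : (x / y) ^ n ≤ (x / y) ^ 2 ^ n :=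
    pow_le_pow_right₀ ((one_lt_div hy).2 hyx).le Nat.lt_two_pow_self.le
  linarith

namespace Seminorm

variable {A : Type*} [NonUnitalCommRing A] [Module ℝ A] (p : Seminorm ℝ A)

theorem map_mul_le_add_sq_div_two (hsq : ∀ a, p (a * a) = p a ^ 2) (x y : A) :
    p (x * y) ≤ (p x + p y) ^ 2 / 2 := by
  have polarization : (4 : ℝ) • (x * y) = (x + y) * (x + y) - (x - y) * (x - y) := by
    rw [ofNat_smul_eq_nsmul]
    simp only [add_mul, mul_add, sub_mul, mul_sub, mul_comm y x]
    abel
  have h4 : 4 * p (x * y) ≤ p (x + y) ^ 2 + p (x - y) ^ 2 := by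
    calc 4 * p (x * y) = p ((x + y) * (x + y) - (x - y) * (x - y)) := by
          rw [← polarization, map_smul_eq_mul, Real.norm_ofNat]
      _ ≤ p ((x + y) * (x + y)) + p ((x - y) * (x - y)) := map_sub_le_add p _ _
      _ = p (x + y) ^ 2 + p (x - y) ^ 2 := by rw [hsq, hsq]
  have hadd : p (x + y) ^ 2 ≤ (p x + p y) ^ 2 :=
    pow_le_pow_left₀ (apply_nonneg p _) (map_add_le_add p x y) 2
  have hsub : p (x - y) ^ 2 ≤ (p x + p y) ^ 2 :=
    pow_le_pow_left₀ (apply_nonneg p _) (map_sub_le_add p x y) 2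
  linarith

theorem map_mul_pow_two_pow_le {C : ℝ} (hsq : ∀ a, p (a * a) = p a ^ 2)
    (hC : ∀ x y, p (x * y) ≤ C * (p x * p y)) (n : ℕ) (x y : A) :
    p (x * y) ^ 2 ^ n ≤ C * (p x * p y) ^ 2 ^ n := by
  induction n generalizing x y with
  | zero => simpa using hC x y
  | succ n ih =>
    calc p (x * y) ^ 2 ^ (n + 1) = p ((x * x) * (y * y)) ^ 2 ^ n := by
          rw [pow_succ', pow_mul, ← hsq, mul_mul_mul_comm]
      _ ≤ C * (p (x * x) * p (y * y)) ^ 2 ^ n := ih _ _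
      _ = C * (p x * p y) ^ 2 ^ (n + 1) := by
          rw [hsq, hsq, ← mul_pow, pow_succ' 2, pow_mul]

variable [SMulCommClass ℝ A A] [IsScalarTower ℝ A A]

theorem map_mul_le_two_mul (hsq : ∀ a, p (a * a) = p a ^ 2) (x y : A) :
    p (x * y) ≤ 2 * (p x * p y) := by
  have hε : ∀ ε > 0, p (x * y) ≤ 2 * ((p x + ε) * (p y + ε)) := by
    intro ε hε
    -- normalize by `p x + ε` rather than `p x`, which may vanish
    set s := p x + ε
    set t := p y + ε
    have hs : 0 < s := by positivity
    have ht : 0 < t := by positivity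
    have hx : p (s⁻¹ • x) ≤ 1 := by
      rw [map_smul_eq_mul, Real.norm_of_nonneg (by positivity), inv_mul_le_one₀ hs]
      linarith
    have hy : p (t⁻¹ • y) ≤ 1 := by
      rw [map_smul_eq_mul, Real.norm_of_nonneg (by positivity), inv_mul_le_one₀ ht]
      linarith
    have hbound : (s * t)⁻¹ * p (x * y) ≤ 2 := by
      calc (s * t)⁻¹ * p (x * y) = p ((s⁻¹ • x) * (t⁻¹ • y)) := by
            rw [smul_mul_smul_comm, ← mul_inv, map_smul_eq_mul,
              Real.norm_of_nonneg (by positivity)]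
        _ ≤ (p (s⁻¹ • x) + p (t⁻¹ • y)) ^ 2 / 2 := p.map_mul_le_add_sq_div_two hsq _ _
        _ ≤ (1 + 1) ^ 2 / 2 := by gcongr
        _ = 2 := by norm_num
    rwa [inv_mul_le_iff₀ (by positivity), mul_comm (s * t)] at hbound
  have hlim : Tendsto (fun ε => 2 * ((p x + ε) * (p y + ε))) (𝓝[>] 0)
      (𝓝 (2 * (p x * p y))) := by
    have hcont : Continuous fun ε : ℝ => 2 * ((p x + ε) * (p y + ε)) := by fun_prop
    simpa using (hcont.tendsto 0).mono_left nhdsWithin_le_nhds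
  exact ge_of_tendsto hlim (eventually_nhdsWithin_of_forall hε)

end Seminorm

theorem seminorm_square_property_submultiplicative_comm_general
    {A : Type*} [NonUnitalCommRing A] [Module ℝ A]
    [SMulCommClass ℝ A A] [IsScalarTower ℝ A A]
    (p : A → ℝ)
    (htriangle : ∀ a b, p (a + b) ≤ p a + p b)
    (hhomog : ∀ (k : ℝ) (a : A), p (k • a) = |k| * p a)
    (hsq : ∀ a, p (a * a) = (p a) ^ 2) :
    ∀ a b, p (a * b) ≤ p a * p b := by
  let q : Seminorm ℝ A := .of p htriangle fun k a => by rw [hhomog, Real.norm_eq_abs]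
  have hsq' : ∀ a, q (a * a) = q a ^ 2 := hsq
  intro a b
  exact le_of_forall_pow_two_pow_le_mul (mul_nonneg (apply_nonneg q a) (apply_nonneg q b))
    (q.map_mul_pow_two_pow_le hsq' (q.map_mul_le_two_mul hsq') · a b)

/-- A seminorm with square property on a commutative real associative algebra is
submultiplicative. -/
theorem seminorm_square_property_submultiplicative_comm
    {A : Type*} [NonUnitalCommRing A] [Module ℝ A]
    [SMulCommClass ℝ A A] [IsScalarTower ℝ A A]
    (p : A → ℝ)
    (hnonneg : ∀ a, 0 ≤ p a)
    (htriangle : ∀ a b, p (a + b) ≤ p a + p b)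
    (hhomog : ∀ (k : ℝ) (a : A), p (k • a) = |k| * p a)
    (hsq : ∀ a, p (a * a) = (p a) ^ 2) :
    ∀ a b, p (a * b) ≤ p a * p b :=
  seminorm_square_property_submultiplicative_comm_general p htriangle hhomog hsq
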